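/- Let {f_k} be a frame for a Hilbert space H. Then {f_k} is a tight frame if and only if it admits a dual frame of the form {C f_k} for some constant C > 0. -/

import Mathlib

open scoped InnerProductSpace

/-!
A family is a Parseval frame when `∑ |⟪f i, x⟫|² = ‖x‖²`, i.e. when its analysis operator
`T x = (⟪f i, x⟫)ᵢ` is an isometry into `ℓ²`. Then `T† T = 1` and `T†` sends the `i`-th unit
vector to `f i`, so expanding `T x` in the unit vectors and applying `T†` gives
`x = ∑ ⟪f i, x⟫ f i`; conversely pairing this expansion with `x` gives back Parseval's identity.
A frame with tight bound `A` is `√A` times a Parseval frame, which turns the statement into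
the Parseval case with `C = A⁻¹`.
-/

theorem lp.hasSum_norm_sq {ι : Type*} {E : ι → Type*} [∀ i, NormedAddCommGroup (E i)]
    (v : lp E 2) : HasSum (fun i => ‖v i‖ ^ 2) (‖v‖ ^ 2) := by
  simpa using lp.hasSum_norm (by norm_num) v

theorem memℓp_two_of_hasSum_norm_sq {ι : Type*} {E : ι → Type*} [∀ i, NormedAddCommGroup (E i)]
    {v : ∀ i, E i} {a : ℝ} (h : HasSum (fun i => ‖v i‖ ^ 2) a) : Memℓp v 2 :=
  memℓp_gen (by simpa using h.summable)

section Frame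

variable (𝕜 : Type*) {H ι : Type*} [RCLike 𝕜] [NormedAddCommGroup H] [InnerProductSpace 𝕜 H]

def IsParsevalFrame (f : ι → H) : Prop :=
  ∀ x : H, HasSum (fun i => ‖⟪f i, x⟫_𝕜‖ ^ 2) (‖x‖ ^ 2)

variable {𝕜} {f : ι → H}

namespace IsParsevalFrame

def analysis (hf : IsParsevalFrame 𝕜 f) : H →ₗᵢ[𝕜] lp (fun _ : ι => 𝕜) 2 where
  toFun x := ⟨fun i => ⟪f i, x⟫_𝕜, memℓp_two_of_hasSum_norm_sq (hf x)⟩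
  map_add' x y := lp.ext <| funext fun i => inner_add_right (f i) x y
  map_smul' c x := lp.ext <| funext fun i => inner_smul_right (f i) x c
  norm_map' x := by
    have h := (lp.hasSum_norm_sq (⟨fun i => ⟪f i, x⟫_𝕜, memℓp_two_of_hasSum_norm_sq (hf x)⟩ :
      lp (fun _ : ι => 𝕜) 2)).unique (hf x)
    exact (pow_left_inj₀ (norm_nonneg _) (norm_nonneg x) two_ne_zero).1 h

@[simp]
theorem analysis_apply (hf : IsParsevalFrame 𝕜 f) (x : H) (i : ι) :
    hf.analysis x i = ⟪f i, x⟫_𝕜 :=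
  rfl

variable [CompleteSpace H]

theorem adjoint_analysis_single [DecidableEq ι] (hf : IsParsevalFrame 𝕜 f) (i : ι) (a : 𝕜) :
    ContinuousLinearMap.adjoint hf.analysis.toContinuousLinearMap (lp.single 2 i a) = a • f i := by
  refine ext_inner_right 𝕜 fun v => ?_
  rw [ContinuousLinearMap.adjoint_inner_left, lp.inner_single_left, inner_smul_left]
  simp [RCLike.inner_apply, mul_comm]

theorem adjoint_analysis_comp_analysis (hf : IsParsevalFrame 𝕜 f) (x : H) :
    ContinuousLinearMap.adjoint hf.analysis.toContinuousLinearMap (hf.analysis x) = x :=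
  ext_inner_left 𝕜 fun v => by
    rw [ContinuousLinearMap.adjoint_inner_right]
    exact hf.analysis.inner_map_map v x

theorem hasSum_inner_smul (hf : IsParsevalFrame 𝕜 f) (x : H) :
    HasSum (fun i => ⟪f i, x⟫_𝕜 • f i) x := by
  classical
  have := (lp.hasSum_single (p := 2) ENNReal.ofNat_ne_top (hf.analysis x)).mapL
    (ContinuousLinearMap.adjoint hf.analysis.toContinuousLinearMap)
  simpa only [hf.adjoint_analysis_single, hf.adjoint_analysis_comp_analysis,
    analysis_apply] using this

end IsParsevalFrame

theorem isParsevalFrame_of_hasSum_inner_smul (h : ∀ x, HasSum (fun i => ⟪f i, x⟫_𝕜 • f i) x) :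
    IsParsevalFrame 𝕜 f := fun x => by
  have := (h x).mapL (innerSL 𝕜 x)
  simp only [innerSL_apply_apply, inner_smul_right, ← inner_conj_symm x (f _), RCLike.mul_conj,
    inner_self_eq_norm_sq_to_K] at this
  exact_mod_cast this

theorem isParsevalFrame_iff_hasSum_inner_smul [CompleteSpace H] :
    IsParsevalFrame 𝕜 f ↔ ∀ x, HasSum (fun i => ⟪f i, x⟫_𝕜 • f i) x :=
  ⟨IsParsevalFrame.hasSum_inner_smul, isParsevalFrame_of_hasSum_inner_smul⟩

theorem summable_norm_inner_sq_of_tsum_eq {A : ℝ} (hA : A ≠ 0) {x : H}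
    (h : ∑' i, ‖⟪f i, x⟫_𝕜‖ ^ 2 = A * ‖x‖ ^ 2) : Summable fun i => ‖⟪f i, x⟫_𝕜‖ ^ 2 := by
  by_contra hs
  rw [tsum_eq_zero_of_not_summable hs, eq_comm] at h
  obtain rfl : x = 0 := by simpa [hA] using h
  simp at hs

variable [Module ℝ H] [IsScalarTower ℝ 𝕜 H]

theorem norm_inner_real_smul_left_sq (c : ℝ) (v x : H) :
    ‖⟪c • v, x⟫_𝕜‖ ^ 2 = c ^ 2 * ‖⟪v, x⟫_𝕜‖ ^ 2 := by
  rw [inner_smul_left_eq_smul, norm_smul, mul_pow, Real.norm_eq_abs, sq_abs]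

theorem inner_real_smul_left_smul_real_smul (c : ℝ) (v x : H) :
    ⟪c • v, x⟫_𝕜 • (c • v) = ⟪v, x⟫_𝕜 • (c ^ 2 • v) := by
  rw [inner_smul_left_eq_smul, smul_assoc, smul_comm c, sq, mul_smul]

theorem forall_hasSum_norm_inner_sq_mul_iff [CompleteSpace H] {A : ℝ} (hA : 0 < A) :
    (∀ x, HasSum (fun i => ‖⟪f i, x⟫_𝕜‖ ^ 2) (A * ‖x‖ ^ 2)) ↔
      ∀ x, HasSum (fun i => ⟪f i, x⟫_𝕜 • (A⁻¹ • f i)) x := by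
  have hc : (√A)⁻¹ ^ 2 = A⁻¹ := by rw [inv_pow, Real.sq_sqrt hA.le]
  calc (∀ x, HasSum (fun i => ‖⟪f i, x⟫_𝕜‖ ^ 2) (A * ‖x‖ ^ 2))
      ↔ IsParsevalFrame 𝕜 fun i => (√A)⁻¹ • f i := by
        refine forall_congr' fun x => ?_
        simp only [norm_inner_real_smul_left_sq, hc]
        rw [← hasSum_mul_left_iff (inv_ne_zero hA.ne'), inv_mul_cancel_left₀ hA.ne']
    _ ↔ ∀ x, HasSum (fun i => ⟪f i, x⟫_𝕜 • (A⁻¹ • f i)) x := by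
        simp only [isParsevalFrame_iff_hasSum_inner_smul, inner_real_smul_left_smul_real_smul, hc]

end Frame

theorem tight_iff_dual_multiple_general {H : Type*} [NormedAddCommGroup H] [InnerProductSpace ℂ H]
    [CompleteSpace H] {ι : Type*} (f : ι → H) :
    (∃ A : ℝ, 0 < A ∧ ∀ x : H, ∑' i, ‖⟪f i, x⟫_ℂ‖ ^ 2 = A * ‖x‖ ^ 2) ↔
      (∃ C : ℝ, 0 < C ∧ ∀ x : H, HasSum (fun i => ⟪f i, x⟫_ℂ • (C • f i)) x) := by
  constructor
  · rintro ⟨A, hA, htight⟩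
    refine ⟨A⁻¹, inv_pos.2 hA, (forall_hasSum_norm_inner_sq_mul_iff hA).1 fun x => ?_⟩
    rw [← htight x]
    exact (summable_norm_inner_sq_of_tsum_eq hA.ne' (htight x)).hasSum
  · rintro ⟨C, hC, hdual⟩
    rw [← inv_inv C] at hdual
    have hC' : 0 < C⁻¹ := inv_pos.2 hC
    exact ⟨C⁻¹, hC', fun x => ((forall_hasSum_norm_inner_sq_mul_iff hC').2 hdual x).tsum_eq⟩

/-- A frame `{f_k}` in a Hilbert space is tight iff it admits a dual
frame of the form `{C f_k}` for some constant `C > 0`. -/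
theorem tight_iff_dual_multiple {H : Type*} [NormedAddCommGroup H] [InnerProductSpace ℂ H]
    [CompleteSpace H] {ι : Type*} (f : ι → H)
    (hframe : ∃ A B : ℝ, 0 < A ∧ 0 < B ∧ ∀ x : H,
      A * ‖x‖ ^ 2 ≤ ∑' i, ‖⟪f i, x⟫_ℂ‖ ^ 2 ∧ ∑' i, ‖⟪f i, x⟫_ℂ‖ ^ 2 ≤ B * ‖x‖ ^ 2) :
    (∃ A : ℝ, 0 < A ∧ ∀ x : H, ∑' i, ‖⟪f i, x⟫_ℂ‖ ^ 2 = A * ‖x‖ ^ 2) ↔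
      (∃ C : ℝ, 0 < C ∧ ∀ x : H, HasSum (fun i => ⟪f i, x⟫_ℂ • (C • f i)) x) :=
  tight_iff_dual_multiple_general f
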